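/- arXiv:1310.8400 — 7 statements merged into one kernel-verified Lean document; each statement's English description precedes it below -/
import Mathlib

section
/- Let A be a B₁-algebra and let M be a saturated ideal of A with M ≠ A which is maximal among proper saturated ideals of A (i.e., every saturated ideal of A that strictly contains M equals A). Then M is a prime ideal of A. -/
/-- An ideal `I` of a `B₁`-algebra is *saturated* if `y ∈ I` and `x + y = y` imply `x ∈ I`. -/
def IsSaturated {A : Type*} [CommSemiring A] (I : Ideal A) : Prop :=
  ∀ x y : A, y ∈ I → x + y = y → x ∈ I

/-- In a `B₁`-algebra (a commutative semiring with `1 + 1 = 1`), a saturated ideal which is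
maximal among proper saturated ideals is prime. -/
theorem maximal_saturated_isPrime {A : Type*} [CommSemiring A] (hchar : (1 : A) + 1 = 1)
    (M : Ideal A) (hMsat : IsSaturated M) (hMne : M ≠ ⊤)
    (hmax : ∀ N : Ideal A, IsSaturated N → M < N → N = ⊤) :
    M.IsPrime := by
  have idem : ∀ a : A, a + a = a := by
    intro a
    calc a + a = (1 + 1) * a := by ring
    _ = a := by rw [hchar, one_mul]
  constructor
  · exact hMne
  · intro x y hxy
    by_contra h
    push_neg at h
    obtain ⟨hx, hy⟩ := h
    set J := M ⊔ Ideal.span {x} with hJ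
    let N : Ideal A :=
      { carrier := {a | ∃ b ∈ J, a + b = b}
        add_mem' := by
          rintro a a' ⟨b, hb, hab⟩ ⟨b', hb', hab'⟩
          exact ⟨b + b', add_mem hb hb', by rw [add_add_add_comm, hab, hab']⟩
        zero_mem' := ⟨0, zero_mem J, by simp⟩
        smul_mem' := by
          rintro r a ⟨b, hb, hab⟩
          exact ⟨r * b, Ideal.mul_mem_left _ _ hb,
            by rw [smul_eq_mul, ← mul_add, hab]⟩ }
    have hMN : M ≤ N := fun a ha => ⟨a, Ideal.mem_sup_left ha, idem a⟩
    have hxN : x ∈ N := ⟨x, Ideal.mem_sup_right (Ideal.subset_span rfl), idem x⟩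
    have hNsat : IsSaturated N := by
      rintro c a ⟨b, hb, hab⟩ hca
      exact ⟨b, hb, by rw [← hab, ← add_assoc, hca, hab]⟩
    have hN : N = ⊤ := hmax N hNsat (SetLike.lt_iff_le_and_exists.mpr ⟨hMN, x, hxN, hx⟩)
    have h1 : (1 : A) ∈ N := hN ▸ Submodule.mem_top
    obtain ⟨b, hb, h1b⟩ := h1
    obtain ⟨m, hm, c, hc, rfl⟩ := Submodule.mem_sup.mp hb
    obtain ⟨r, rfl⟩ := Ideal.mem_span_singleton'.mp hc
    have hyb : y * (m + r * x) ∈ M := by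
      rw [mul_add]
      exact add_mem (Ideal.mul_mem_left _ _ hm)
        (by rw [show y * (r * x) = r * (x * y) by ring]; exact Ideal.mul_mem_left _ _ hxy)
    have : y + y * (m + r * x) = y * (m + r * x) := by
      calc y + y * (m + r * x) = y * (1 + (m + r * x)) := by ring
      _ = y * (m + r * x) := by rw [h1b]
    exact hy (hMsat y _ hyb this)
end

section
/- Let A be a B₁-algebra and let I and J be ideals of A. Then, as subsets of A, r(\overline{I ∩ J}) = r(\overline{I} ∩ \overline{J}) = r(\overline{I}) ∩ r(\overline{J}). -/
/-- The saturation `\overline{I} = {x | ∃ y ∈ I, x + y = y}` of an ideal `I`. -/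
def saturation {A : Type*} [CommSemiring A] (I : Ideal A) : Set A :=
  {x | ∃ y ∈ I, x + y = y}

/-- The radical `r(S) = {x | xⁿ ∈ S for some n ≥ 1}` of a subset `S`. -/
def rad {A : Type*} [CommSemiring A] (S : Set A) : Set A :=
  {x | ∃ n : ℕ, 1 ≤ n ∧ x ^ n ∈ S}

lemma sq_absorb {A : Type*} [CommSemiring A] (a y z : A) (hy : a + y = y) (hz : a + z = z) :
    a * a + y * z = y * z := by
  have h1 : a * a + a * y = a * y := by rw [← mul_add, hy]
  have h2 : a * y + y * z = y * z := by rw [mul_comm a y, ← mul_add, hz]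
  calc a * a + y * z = a * a + (a * y + y * z) := by rw [h2]
    _ = (a * a + a * y) + y * z := by ring
    _ = a * y + y * z := by rw [h1]
    _ = y * z := h2

/-- For ideals `I`, `J` of a `B₁`-algebra:
`r(\overline{I ∩ J}) = r(\overline{I} ∩ \overline{J}) = r(\overline{I}) ∩ r(\overline{J})`. -/
theorem rad_saturation_inter {A : Type*} [CommSemiring A] (hchar : (1 : A) + 1 = 1)
    (I J : Ideal A) :
    rad (saturation (I ⊓ J)) = rad (saturation I ∩ saturation J) ∧
      rad (saturation I ∩ saturation J) = rad (saturation I) ∩ rad (saturation J) := by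
  constructor
  · ext x
    constructor
    · rintro ⟨n, hn, y, hyIJ, hxy⟩
      exact ⟨n, hn, ⟨y, (Ideal.mem_inf.mp hyIJ).1, hxy⟩, ⟨y, (Ideal.mem_inf.mp hyIJ).2, hxy⟩⟩
    · rintro ⟨n, hn, ⟨y, hyI, hy⟩, z, hzJ, hz⟩
      refine ⟨n + n, by omega, y * z,
        Ideal.mem_inf.mpr ⟨I.mul_mem_right _ hyI, J.mul_mem_left _ hzJ⟩, ?_⟩
      rw [pow_add]
      exact sq_absorb _ _ _ hy hz
  · ext x
    constructor
    · rintro ⟨n, hn, h1, h2⟩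
      exact ⟨⟨n, hn, h1⟩, ⟨n, hn, h2⟩⟩
    · rintro ⟨⟨n, hn, y, hyI, hy⟩, m, hm, z, hzJ, hz⟩
      refine ⟨n + m, by omega, ⟨x ^ m * y, I.mul_mem_left _ hyI, ?_⟩,
        ⟨x ^ n * z, J.mul_mem_left _ hzJ, ?_⟩⟩
      · rw [pow_add, mul_comm (x ^ n), ← mul_add, hy]
      · rw [pow_add, ← mul_add, hz]
end

section
/- Let A be a B₁-algebra, J a saturated ideal of A, and y ∈ A with y ∉ J. Suppose P := C_y(J) is a maximal element (for inclusion) of the set of J-conductors, i.e., for every x ∉ J, if C_y(J) ⊆ C_x(J) then C_y(J) = C_x(J). Then P is a prime ideal of A. -/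
/-- The conductor ideal `C_x(J) = {y | x * y ∈ J}`. -/
def conductorI {A : Type*} [CommSemiring A] (x : A) (J : Ideal A) : Ideal A where
  carrier := {y | x * y ∈ J}
  zero_mem' := by simp
  add_mem' := by
    intro a b ha hb
    simpa [mul_add] using J.add_mem ha hb
  smul_mem' := by
    intro c y hy
    simp only [smul_eq_mul, Set.mem_setOf_eq] at *
    rw [mul_left_comm]
    exact J.mul_mem_left c hy

section Conductor

variable {A : Type*} [CommSemiring A] {J : Ideal A} {x a z : A}

theorem mem_conductorI : z ∈ conductorI x J ↔ x * z ∈ J := Iff.rfl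

theorem conductorI_ne_top (hx : x ∉ J) : conductorI x J ≠ ⊤ := fun h =>
  hx <| mul_one x ▸ mem_conductorI.mp ((Ideal.eq_top_iff_one _).mp h)

theorem mem_conductorI_mul : z ∈ conductorI (x * a) J ↔ a * z ∈ conductorI x J := by
  rw [mem_conductorI, mem_conductorI, mul_assoc]

theorem conductorI_le_conductorI_mul : conductorI x J ≤ conductorI (x * a) J := fun _ hz =>
  mem_conductorI_mul.mpr (Ideal.mul_mem_left _ a hz)

end Conductor

theorem maximal_conductor_isPrime_general {A : Type*} [CommSemiring A]
    (J : Ideal A) (y : A) (hy : y ∉ J)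
    (hmax : ∀ x : A, x ∉ J → conductorI y J ≤ conductorI x J →
      conductorI y J = conductorI x J) :
    (conductorI y J).IsPrime := by
  refine ⟨conductorI_ne_top hy, fun {a b} hab => or_iff_not_imp_left.mpr fun ha => ?_⟩
  -- `a ∉ C_y(J)` means `y * a ∉ J`, so `C_{ya}(J)` is a conductor containing `C_y(J)`.
  have heq := hmax (y * a) ha conductorI_le_conductorI_mul
  exact heq ▸ mem_conductorI_mul.mpr hab

/-- In a `B₁`-algebra, if `J` is a saturated ideal, `y ∉ J`, and `C_y(J)` is maximal among
the `J`-conductors, then `C_y(J)` is a prime ideal. -/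
theorem maximal_conductor_isPrime {A : Type*} [CommSemiring A] (hchar : (1 : A) + 1 = 1)
    (J : Ideal A) (hJsat : IsSaturated J) (y : A) (hy : y ∉ J)
    (hmax : ∀ x : A, x ∉ J → conductorI y J ≤ conductorI x J →
      conductorI y J = conductorI x J) :
    (conductorI y J).IsPrime :=
  maximal_conductor_isPrime_general J y hy hmax
end

section
/- Let A be a B₁-algebra and let P be a minimal prime ideal of A (a prime ideal minimal with respect to inclusion among all prime ideals of A). Then every nonzero element x of P is a zero-divisor in A, i.e., there exists b ∈ A with b ≠ 0 and xb = 0. -/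
/-- In a `B₁`-algebra, every nonzero element of a minimal prime ideal is a zero-divisor. -/
theorem minimal_prime_subset_zeroDivisors {A : Type*} [CommSemiring A]
    (hchar : (1 : A) + 1 = 1) (P : Ideal A) (hP : P.IsPrime)
    (hmin : ∀ Q : Ideal A, Q.IsPrime → Q ≤ P → Q = P) :
    ∀ x ∈ P, x ≠ 0 → ∃ b : A, b ≠ 0 ∧ x * b = 0 := by
  intro x hxP hx0
  by_contra h
  push_neg at h
  -- so x*b = 0 → b = 0
  have hreg : ∀ b : A, x * b = 0 → b = 0 := by
    intro b hb
    by_contra hb0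
    exact h b hb0 hb
  set S : Submonoid A := Submonoid.closure ((↑P)ᶜ ∪ {x}) with hS
  have hform : ∀ s ∈ S, ∃ a : A, ∃ n : ℕ, a ∉ P ∧ s = a * x ^ n := by
    intro s hs
    induction hs using Submonoid.closure_induction with
    | mem y hy =>
      rcases hy with hy | hy
      · exact ⟨y, 0, hy, by simp⟩
      · exact ⟨1, 1, hP.ne_top ∘ (Ideal.eq_top_of_isUnit_mem P · isUnit_one),
          by simp [Set.mem_singleton_iff.mp hy]⟩
    | one => exact ⟨1, 0, hP.ne_top ∘ (Ideal.eq_top_of_isUnit_mem P · isUnit_one), by simp⟩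
    | mul s t _ _ ihs iht =>
      obtain ⟨a, m, ha, rfl⟩ := ihs
      obtain ⟨b, n, hb, rfl⟩ := iht
      refine ⟨a * b, m + n, fun hab => ?_, by ring⟩
      rcases hP.mem_or_mem hab with h' | h' <;> [exact ha h'; exact hb h']
  have h0S : (0 : A) ∉ S := by
    intro h0
    obtain ⟨a, n, ha, hne⟩ := hform 0 h0
    have : a = 0 := by
      induction n with
      | zero => simpa using hne.symm
      | succ k ih =>
        apply ih
        have : x * (a * x ^ k) = 0 := by rw [show x * (a * x ^ k) = a * x ^ (k + 1) by ring, ← hne]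
        exact (hreg _ this).symm
    exact ha (this ▸ P.zero_mem)
  have hdisj : Disjoint ((⊥ : Ideal A) : Set A) (S : Set A) := by
    rw [Set.disjoint_left]
    rintro y hy
    simp only [SetLike.mem_coe, Ideal.mem_bot] at hy
    subst hy
    exact fun h' => h0S h'
  obtain ⟨p, hp, -, hpd⟩ := Ideal.exists_le_prime_disjoint ⊥ S hdisj
  have hpP : p ≤ P := by
    intro y hy
    by_contra hyP
    exact Set.disjoint_left.mp hpd hy
      (Submonoid.subset_closure (Or.inl hyP))
  have : p = P := hmin p hp hpP
  exact Set.disjoint_left.mp hpd (this ▸ hxP)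
    (Submonoid.subset_closure (Or.inr rfl))
end

section
/- Let A be a B₁-algebra and let P be a saturated prime ideal of A that is minimal with respect to inclusion among all saturated prime ideals of A. Then every nonzero element x of P is a zero-divisor in A, i.e., there exists b ∈ A with b ≠ 0 and xb = 0. -/
/-- The saturation closure of an ideal in a semiring. -/
def satCl {A : Type*} [CommSemiring A] (I : Ideal A) : Ideal A where
  carrier := {x | ∃ y ∈ I, x + y = y}
  add_mem' := by
    rintro a b ⟨y, hy, hay⟩ ⟨z, hz, hbz⟩
    exact ⟨y + z, I.add_mem hy hz, by
      rw [show a + b + (y + z) = (a + y) + (b + z) by ring, hay, hbz]⟩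
  zero_mem' := ⟨0, I.zero_mem, by simp⟩
  smul_mem' := by
    rintro r a ⟨y, hy, hay⟩
    exact ⟨r * y, I.mul_mem_left r hy, by
      rw [smul_eq_mul, ← mul_add, hay]⟩

theorem mem_satCl {A : Type*} [CommSemiring A] {I : Ideal A} {x : A} :
    x ∈ satCl I ↔ ∃ y ∈ I, x + y = y := Iff.rfl

theorem satCl_saturated {A : Type*} [CommSemiring A] (I : Ideal A) : IsSaturated (satCl I) := by
  rintro t y ⟨z, hz, hyz⟩ hty
  exact ⟨z, hz, by rw [← hyz, ← add_assoc, hty]⟩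

/-- In a `B₁`-algebra, every nonzero element of a minimal saturated prime ideal (minimal among
saturated prime ideals) is a zero-divisor. -/
theorem minimal_saturated_prime_subset_zeroDivisors {A : Type*} [CommSemiring A]
    (hchar : (1 : A) + 1 = 1) (P : Ideal A) (hPsat : IsSaturated P) (hP : P.IsPrime)
    (hmin : ∀ Q : Ideal A, IsSaturated Q → Q.IsPrime → Q ≤ P → Q = P) :
    ∀ x ∈ P, x ≠ 0 → ∃ b : A, b ≠ 0 ∧ x * b = 0 := by
  intro x hxP hx0
  by_contra hcon
  push_neg at hcon
  -- hcon : ∀ b, b ≠ 0 → x * b ≠ 0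
  -- The multiplicative set of elements x^n * s with s ∉ P
  set S : Set A := {a | ∃ n : ℕ, ∃ s, s ∉ P ∧ a = x ^ n * s} with hS
  have hidem : ∀ a : A, a + a = a := by
    intro a
    calc a + a = (1 + 1) * a := by ring
    _ = a := by rw [hchar, one_mul]
  have hle_satCl : ∀ I : Ideal A, I ≤ satCl I := fun I z hz => ⟨z, hz, hidem z⟩
  -- 0 ∉ S
  have h0S : (0 : A) ∉ S := by
    rintro ⟨n, s, hsP, hns⟩
    have : ∀ m : ℕ, x ^ m * s ≠ 0 := by
      intro m
      induction m with
      | zero =>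
        intro h
        rw [pow_zero, one_mul] at h
        exact hsP (h ▸ P.zero_mem)
      | succ k ih =>
        have : x ^ (k+1) * s = x * (x ^ k * s) := by ring
        rw [this]
        exact hcon _ ih
    exact this n hns.symm
  -- S is closed under multiplication and contains 1
  have h1S : (1 : A) ∈ S := ⟨0, 1, hP.1 ∘ (Ideal.eq_top_iff_one P).2, by simp⟩
  have hmulS : ∀ a ∈ S, ∀ b ∈ S, a * b ∈ S := by
    rintro a ⟨n, s, hs, rfl⟩ b ⟨m, t, ht, rfl⟩
    exact ⟨n + m, s * t, fun h => ((hP.mem_or_mem h).elim hs ht), by ring⟩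
  -- The family of saturated ideals disjoint from S
  set F : Set (Ideal A) := {Q | IsSaturated Q ∧ ∀ a ∈ Q, a ∉ S} with hF
  have hbot : (⊥ : Ideal A) ∈ F := by
    constructor
    · intro a y hy hay
      simp only [Ideal.mem_bot] at hy ⊢
      subst hy
      simpa using hay
    · intro a ha
      rw [Ideal.mem_bot] at ha
      subst ha
      exact h0S
  -- Zorn's lemma
  obtain ⟨Q, -, hQF, hQmax⟩ := zorn_le_nonempty₀ F (fun c hcF hchain y hyc => by
    refine ⟨sSup c, ⟨?_, ?_⟩, fun z hz => le_sSup hz⟩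
    · intro a b hb hab
      obtain ⟨I, hIc, hbI⟩ := (Submodule.mem_sSup_of_directed ⟨y, hyc⟩ hchain.directedOn).1 hb
      exact le_sSup hIc ((hcF hIc).1 a b hbI hab)
    · intro a ha haS
      obtain ⟨I, hIc, haI⟩ := (Submodule.mem_sSup_of_directed ⟨y, hyc⟩ hchain.directedOn).1 ha
      exact (hcF hIc).2 a haI haS) ⊥ hbot
  obtain ⟨hQsat, hQS⟩ := hQF
  -- Q is prime
  have hQne : Q ≠ ⊤ := fun h => hQS 1 (h ▸ Submodule.mem_top) h1S
  have hQprime : Q.IsPrime := by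
    refine ⟨hQne, ?_⟩
    intro a b hab
    by_contra hnab
    push_neg at hnab
    obtain ⟨ha, hb⟩ := hnab
    -- for any c ∉ Q, satCl (Q ⊔ span {c}) meets S
    have key : ∀ c : A, c ∉ Q → ∃ s ∈ S, ∃ i ∈ Q, ∃ r : A, s + (i + r * c) = i + r * c := by
      intro c hc
      by_contra hno
      push_neg at hno
      have hmem : ∀ z ∈ satCl (Q ⊔ Ideal.span {c}), z ∉ S := by
        intro z hz hzS
        obtain ⟨y, hy, hzy⟩ := hz
        obtain ⟨i, hi, w, hw, rfl⟩ := Submodule.mem_sup.1 hy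
        obtain ⟨r, rfl⟩ := Ideal.mem_span_singleton'.1 hw
        exact hno z hzS i hi r hzy
      have hsat : satCl (Q ⊔ Ideal.span {c}) ∈ F := ⟨satCl_saturated _, hmem⟩
      have hle : Q ≤ satCl (Q ⊔ Ideal.span {c}) :=
        le_trans le_sup_left (hle_satCl _)
      have := le_antisymm (hQmax hsat hle) hle
      have hcmem : c ∈ satCl (Q ⊔ Ideal.span {c}) :=
        hle_satCl _ (Submodule.mem_sup_right (Ideal.mem_span_singleton_self c))
      rw [this] at hcmem
      exact hc hcmem
    obtain ⟨s₁, hs₁S, i₁, hi₁, r₁, h₁⟩ := key a ha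
    obtain ⟨s₂, hs₂S, i₂, hi₂, r₂, h₂⟩ := key b hb
    -- s₁ * s₂ ≤ (i₁ + r₁*a)(i₂ + r₂*b) ∈ Q
    set z₁ := i₁ + r₁ * a
    set z₂ := i₂ + r₂ * b
    have hzQ : z₁ * z₂ ∈ Q := by
      have : z₁ * z₂ = (i₁ * i₂ + i₁ * (r₂ * b) + (r₁ * a) * i₂) + (r₁ * r₂) * (a * b) := by
        simp only [z₁, z₂]; ring
      rw [this]
      exact Q.add_mem (Q.add_mem (Q.add_mem (Q.mul_mem_right _ hi₁) (Q.mul_mem_right _ hi₁))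
        (Q.mul_mem_left _ hi₂)) (Q.mul_mem_left _ hab)
    have hsz : s₁ * s₂ + z₁ * z₂ = z₁ * z₂ := by
      have expand : (s₁ + z₁) * (s₂ + z₂) = z₁ * z₂ := by rw [h₁, h₂]
      have e1 : s₁ * s₂ + (s₁ * z₂ + z₁ * s₂) + z₁ * z₂ = z₁ * z₂ := by
        conv_rhs => rw [← expand]
        ring
      calc s₁ * s₂ + z₁ * z₂
          = s₁ * s₂ + (s₁ * s₂ + (s₁ * z₂ + z₁ * s₂) + z₁ * z₂) := by rw [e1]
        _ = (s₁ * s₂ + s₁ * s₂) + (s₁ * z₂ + z₁ * s₂) + z₁ * z₂ := by ring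
        _ = s₁ * s₂ + (s₁ * z₂ + z₁ * s₂) + z₁ * z₂ := by rw [hidem (s₁ * s₂)]
        _ = z₁ * z₂ := e1
    exact hQS (s₁ * s₂) (hQsat _ _ hzQ hsz) (hmulS _ hs₁S _ hs₂S)
  -- Q ≤ P
  have hQP : Q ≤ P := by
    intro q hq
    by_contra hqP
    exact hQS q hq ⟨0, q, hqP, by simp⟩
  have := hmin Q hQsat hQprime hQP
  subst this
  exact hQS x hxP ⟨1, 1, fun h => hQne ((Ideal.eq_top_iff_one Q).2 h), by simp⟩
end

section
/- Let A be a weakly noetherian B₁-algebra and let P be a minimal prime ideal of A (a prime ideal minimal with respect to inclusion among all prime ideals of A). Then there exists u ∈ A with u ≠ 0 such that P = Ann_A(u); in particular, P is a saturated ideal of A. -/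
/-- `A` is *weakly noetherian* if every ascending chain of saturated ideals is eventually
stationary. -/
def WeaklyNoetherian (A : Type*) [CommSemiring A] : Prop :=
  ∀ f : ℕ → Ideal A, (∀ n, IsSaturated (f n)) → (∀ n, f n ≤ f (n + 1)) →
    ∃ N, ∀ n, N ≤ n → f n = f N

section Aux

variable {A : Type*} [CommSemiring A]

/-- The annihilator of an element, as an ideal. -/
def annIdeal (u : A) : Ideal A where
  carrier := {x | u * x = 0}
  zero_mem' := mul_zero u
  add_mem' := by
    intro a b ha hb
    simp only [Set.mem_setOf_eq] at *
    rw [mul_add, ha, hb, add_zero]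
  smul_mem' := by
    intro c a ha
    simp only [Set.mem_setOf_eq, smul_eq_mul] at *
    rw [mul_left_comm, ha, mul_zero]

@[simp] lemma mem_annIdeal {u x : A} : x ∈ annIdeal u ↔ u * x = 0 := Iff.rfl

lemma annIdeal_saturated (u : A) : IsSaturated (annIdeal u) := by
  intro x y hy hxy
  have : u * x + u * y = u * y := by rw [← mul_add, hxy]
  rw [mem_annIdeal] at hy ⊢
  rwa [hy, add_zero] at this

lemma annIdeal_mono {u v : A} : annIdeal u ≤ annIdeal (u * v) := by
  intro x hx
  rw [mem_annIdeal] at hx ⊢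
  rw [mul_comm u v, mul_assoc, hx, mul_zero]

/-- The saturation of an ideal. -/
def satIdeal (I : Ideal A) : Ideal A where
  carrier := {x | ∃ y ∈ I, x + y = y}
  zero_mem' := ⟨0, I.zero_mem, by simp⟩
  add_mem' := by
    rintro a b ⟨y, hy, hay⟩ ⟨z, hz, hbz⟩
    exact ⟨y + z, I.add_mem hy hz, by
      rw [show a + b + (y + z) = (a + y) + (b + z) by ring, hay, hbz]⟩
  smul_mem' := by
    rintro c a ⟨y, hy, hay⟩
    exact ⟨c * y, I.mul_mem_left c hy, by
      simp only [smul_eq_mul]; rw [← mul_add, hay]⟩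

lemma mem_satIdeal {I : Ideal A} {x : A} : x ∈ satIdeal I ↔ ∃ y ∈ I, x + y = y := Iff.rfl

lemma satIdeal_saturated (I : Ideal A) : IsSaturated (satIdeal I) := by
  rintro x z ⟨y, hy, hzy⟩ hxz
  exact ⟨y, hy, by rw [← hzy, ← add_assoc, hxz]⟩

lemma le_satIdeal (hchar : (1 : A) + 1 = 1) (I : Ideal A) : I ≤ satIdeal I := by
  intro x hx
  have : x + x = x := by
    have := congrArg (x * ·) hchar
    simpa [mul_add] using this
  exact ⟨x, hx, this⟩

/-- In a weakly noetherian algebra, every nonempty family of saturated ideals has a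
maximal element. -/
lemma exists_maximal (hwn : WeaklyNoetherian A) (S : Set (Ideal A))
    (hsat : ∀ I ∈ S, IsSaturated I) (hne : S.Nonempty) :
    ∃ M ∈ S, ∀ I ∈ S, M ≤ I → I = M := by
  by_contra h
  push_neg at h
  obtain ⟨I0, hI0⟩ := hne
  choose! f hfS hfle hfne using h
  let g : ℕ → Ideal A := fun n => Nat.rec I0 (fun _ J => f J) n
  have hgsucc : ∀ n, g (n + 1) = f (g n) := fun n => rfl
  have hgS : ∀ n, g n ∈ S := by
    intro n
    induction n with
    | zero => exact hI0
    | succ k ih => rw [hgsucc]; exact hfS _ ih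
  obtain ⟨N, hN⟩ := hwn g (fun n => hsat _ (hgS n)) (fun n => hfle _ (hgS n))
  exact hfne _ (hgS N) ((hgsucc N) ▸ hN (N + 1) (Nat.le_succ N))

lemma addIdem (hchar : (1 : A) + 1 = 1) (a : A) : a + a = a := by
  have := congrArg (a * ·) hchar
  simpa [mul_add] using this

/-- Step 2: for a minimal prime `P`, every `x ∈ P` is killed by a power together with
some `s ∉ P`. -/
lemma minimal_prime_pow_ann (hchar : (1 : A) + 1 = 1) (hwn : WeaklyNoetherian A)
    (P : Ideal A) (hP : P.IsPrime)
    (hmin : ∀ Q : Ideal A, Q.IsPrime → Q ≤ P → Q = P) :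
    ∀ x ∈ P, ∃ s, s ∉ P ∧ ∃ m : ℕ, s * x ^ m = 0 := by
  intro x hx
  by_contra hcon
  push_neg at hcon
  -- the multiplicative set
  set S : Set A := {a | ∃ s, s ∉ P ∧ ∃ m : ℕ, a = s * x ^ m} with hS
  have h0S : (0 : A) ∉ S := by
    rintro ⟨s, hs, m, h0⟩
    exact hcon s hs m h0.symm
  -- family of saturated ideals disjoint from S
  set T : Set (Ideal A) := {I | IsSaturated I ∧ ∀ a ∈ I, a ∉ S} with hT
  have hbot : (⊥ : Ideal A) ∈ T := by
    constructor
    · intro a y hy hay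
      rw [Ideal.mem_bot] at hy ⊢
      rwa [hy, add_zero] at hay
    · intro a ha
      rw [Ideal.mem_bot] at ha
      rw [ha]; exact h0S
  obtain ⟨Q, hQT, hQmax⟩ := exists_maximal hwn T (fun I hI => hI.1) ⟨⊥, hbot⟩
  obtain ⟨hQsat, hQdis⟩ := hQT
  -- Q is prime
  have hQprime : Q.IsPrime := by
    constructor
    · intro htop
      have h1 : (1 : A) ∈ Q := by rw [htop]; trivial
      exact hQdis 1 h1 ⟨1, hP.ne_top ∘ (Ideal.eq_top_iff_one P).mpr, 0, by simp⟩
    · intro a b hab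
      by_contra hab'
      push_neg at hab'
      obtain ⟨ha, hb⟩ := hab'
      -- enlarged saturated ideals meet S
      have key : ∀ c : A, c ∉ Q → (a = c ∨ b = c) →
          ∃ s ∈ S, ∃ t, (∃ q ∈ Q, ∃ r, q + c * r = t) ∧ s + t = t := by
        intro c hc _
        set Qc : Ideal A := satIdeal (Q ⊔ Ideal.span {c}) with hQc
        have hle : Q ≤ Qc := le_trans le_sup_left (le_satIdeal hchar _)
        have hcQc : c ∈ Qc :=
          le_trans le_sup_right (le_satIdeal hchar _) (Ideal.mem_span_singleton_self c)
        have hne : Qc ≠ Q := fun h => hc (h ▸ hcQc)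
        -- Qc cannot be in T, so it meets S
        have : Qc ∉ T := fun hmem => hne (hQmax Qc hmem hle)
        rw [hT, Set.mem_setOf_eq] at this
        push_neg at this
        obtain ⟨s, hsQc, hsS⟩ := this (satIdeal_saturated _)
        obtain ⟨t, ht, hst⟩ := hsQc
        rw [Submodule.mem_sup] at ht
        obtain ⟨q, hq, z, hz, hqz⟩ := ht
        rw [Ideal.mem_span_singleton'] at hz
        obtain ⟨r, hr⟩ := hz
        exact ⟨s, hsS, t, ⟨q, hq, r, by rw [mul_comm c r, hr, hqz]⟩, hst⟩
      obtain ⟨s1, hs1S, t1, ⟨q1, hq1, r1, ht1⟩, hst1⟩ := key a ha (Or.inl rfl)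
      obtain ⟨s2, hs2S, t2, ⟨q2, hq2, r2, ht2⟩, hst2⟩ := key b hb (Or.inr rfl)
      -- s1 * s2 ≤ t1 * t2
      have hmul : s1 * s2 + t1 * t2 = t1 * t2 := by
        have expand : t1 * t2 = s1 * s2 + (s1 * t2 + t1 * s2 + t1 * t2) := by
          conv_lhs => rw [← hst1, ← hst2]
          ring
        calc s1 * s2 + t1 * t2
            = s1 * s2 + (s1 * s2 + (s1 * t2 + t1 * s2 + t1 * t2)) := by rw [← expand]
          _ = (s1 * s2 + s1 * s2) + (s1 * t2 + t1 * s2 + t1 * t2) := by ring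
          _ = s1 * s2 + (s1 * t2 + t1 * s2 + t1 * t2) := by rw [addIdem hchar (s1 * s2)]
          _ = t1 * t2 := expand.symm
      -- t1 * t2 ∈ Q
      have ht12 : t1 * t2 ∈ Q := by
        rw [← ht1, ← ht2]
        have : (q1 + a * r1) * (q2 + b * r2)
            = q1 * (q2 + b * r2) + (a * b) * (r1 * r2) + q2 * (a * r1) := by ring
        rw [this]
        exact Q.add_mem (Q.add_mem (Q.mul_mem_right _ hq1) (Q.mul_mem_right _ hab))
          (Q.mul_mem_right _ hq2)
      have hs12Q : s1 * s2 ∈ Q := hQsat _ _ ht12 hmul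
      -- but s1 * s2 ∈ S
      obtain ⟨u1, hu1, m1, hm1⟩ := hs1S
      obtain ⟨u2, hu2, m2, hm2⟩ := hs2S
      have : s1 * s2 ∈ S := by
        refine ⟨u1 * u2, fun hmem => ?_, m1 + m2, by rw [hm1, hm2, pow_add]; ring⟩
        rcases hP.mem_or_mem hmem with h | h
        · exact hu1 h
        · exact hu2 h
      exact hQdis _ hs12Q this
  -- Q ≤ P
  have hQP : Q ≤ P := by
    intro q hq
    by_contra hqP
    exact hQdis q hq ⟨q, hqP, 0, by simp⟩
  have : Q = P := hmin Q hQprime hQP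
  -- but x ∈ P = Q and x ∈ S
  have hxS : x ∈ S := ⟨1, hP.ne_top ∘ (Ideal.eq_top_iff_one P).mpr, 1, by simp⟩
  exact hQdis x (this ▸ hx) hxS

end Aux

/-- In a weakly noetherian `B₁`-algebra, every minimal prime ideal is of the form `Ann_A(u)`
for some `u ≠ 0`; in particular it is saturated. -/
theorem minimal_prime_eq_annihilator {A : Type*} [CommSemiring A]
    (hchar : (1 : A) + 1 = 1) (hwn : WeaklyNoetherian A) (P : Ideal A) (hP : P.IsPrime)
    (hmin : ∀ Q : Ideal A, Q.IsPrime → Q ≤ P → Q = P) :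
    (∃ u : A, u ≠ 0 ∧ ∀ x : A, x ∈ P ↔ u * x = 0) ∧ IsSaturated P := by
  have h10 : (1 : A) ≠ 0 := by
    intro h
    exact hP.ne_top ((Ideal.eq_top_iff_one P).mpr (h ▸ P.zero_mem))
  -- family of annihilators of nonzero elements, contained in P
  set F : Set (Ideal A) := {I | ∃ w : A, w ≠ 0 ∧ I = annIdeal w ∧ I ≤ P} with hF
  have hFsat : ∀ I ∈ F, IsSaturated I := by
    rintro I ⟨w, _, rfl, _⟩
    exact annIdeal_saturated w
  have hFne : F.Nonempty := by
    refine ⟨annIdeal 1, 1, h10, rfl, ?_⟩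
    intro y hy
    rw [mem_annIdeal, one_mul] at hy
    rw [hy]; exact P.zero_mem
  obtain ⟨M, hMF, hMmax⟩ := exists_maximal hwn F hFsat hFne
  obtain ⟨u, hu0, rfl, hMP⟩ := hMF
  -- key step: if v ∉ P then Ann(u*v) = Ann(u)
  have hstep : ∀ v : A, v ∉ P → annIdeal (u * v) = annIdeal u := by
    intro v hv
    refine hMmax _ ⟨u * v, ?_, rfl, ?_⟩ annIdeal_mono
    · intro huv
      have : u * v = 0 := huv
      have : v ∈ annIdeal u := this
      exact hv (hMP this)
    · intro y hy
      rw [mem_annIdeal, mul_assoc] at hy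
      have : v * y ∈ annIdeal u := hy
      rcases hP.mem_or_mem (hMP this) with h | h
      · exact absurd h hv
      · exact h
  -- P ⊆ Ann(u)
  have hPM : ∀ x ∈ P, u * x = 0 := by
    intro x hx
    obtain ⟨s, hs, m, hsm⟩ := minimal_prime_pow_ann hchar hwn P hP hmin x hx
    have hum : u * x ^ m = 0 := by
      have : x ^ m ∈ annIdeal (u * s) := by
        rw [mem_annIdeal, mul_assoc, mul_comm s, ← mul_assoc, mul_comm (u * x ^ m) s,
          ← mul_assoc, mul_comm s u, mul_assoc, hsm, mul_zero]
      rw [hstep s hs] at this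
      exact this
    -- least n with u * x ^ n = 0
    have hex : ∃ n, u * x ^ n = 0 := ⟨m, hum⟩
    classical
    set n := Nat.find hex with hn
    have hn0 : u * x ^ n = 0 := Nat.find_spec hex
    have hnpos : 0 < n := by
      rcases Nat.eq_zero_or_pos n with h | h
      · exfalso; apply hu0; have := hn0; rwa [h, pow_zero, mul_one] at this
      · exact h
    rcases Nat.lt_or_ge 1 n with h1n | h1n
    · -- n ≥ 2 : derive contradiction
      exfalso
      have hw0 : u * x ^ (n - 1) ≠ 0 := Nat.find_min hex (by omega)
      by_cases hwP : annIdeal (u * x ^ (n - 1)) ≤ P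
      · -- maximality forces x ∈ Ann(u), contradicting minimality of n
        have heq : annIdeal (u * x ^ (n - 1)) = annIdeal u :=
          hMmax _ ⟨u * x ^ (n - 1), hw0, rfl, hwP⟩ annIdeal_mono
        have hxmem : x ∈ annIdeal (u * x ^ (n - 1)) := by
          rw [mem_annIdeal, mul_assoc, ← pow_succ]
          have : n - 1 + 1 = n := by omega
          rw [this, hn0]
        rw [heq, mem_annIdeal] at hxmem
        have : u * x ^ 1 = 0 := by rwa [pow_one]
        exact absurd (Nat.find_le this : n ≤ 1) (by omega)
      · -- there is y ∉ P with u * x^(n-1) * y = 0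
        rw [SetLike.le_def] at hwP
        push_neg at hwP
        obtain ⟨y, hy, hyP⟩ := hwP
        rw [mem_annIdeal] at hy
        have : x ^ (n - 1) ∈ annIdeal (u * y) := by
          rw [mem_annIdeal, mul_assoc, mul_comm y, ← mul_assoc]
          exact hy
        rw [hstep y hyP, mem_annIdeal] at this
        exact hw0 this
    · -- n = 1
      have : n = 1 := by omega
      rw [this, pow_one] at hn0
      exact hn0
  have hPeq : ∀ x : A, x ∈ P ↔ u * x = 0 := by
    intro x
    constructor
    · exact hPM x
    · intro h; exact hMP h
  refine ⟨⟨u, hu0, hPeq⟩, ?_⟩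
  intro x y hy hxy
  rw [hPeq] at hy ⊢
  exact annIdeal_saturated u x y hy hxy
end

section
/- Let A be a B₁-algebra and let I be an ideal of A admitting an irredundant primary decomposition: I = Q₁ ∩ … ∩ Qₙ where each Qᵢ is a primary ideal of A and, for every j, the intersection ⋂_{i ≠ j} Qᵢ is not contained in Q_j. Then D_A(I) = r(Q₁) ∪ … ∪ r(Qₙ). -/
/-- An ideal `Q` is *primary* if `Q ≠ A` and `x * y ∈ Q` implies `x ∈ Q` or `yⁿ ∈ Q` for
some `n ≥ 1`. -/
def IsPrimaryI {A : Type*} [CommSemiring A] (Q : Ideal A) : Prop :=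
  Q ≠ ⊤ ∧ ∀ x y : A, x * y ∈ Q → x ∈ Q ∨ ∃ n : ℕ, 1 ≤ n ∧ y ^ n ∈ Q

/-- In a `B₁`-algebra, if `I = Q₁ ∩ … ∩ Qₙ` is an irredundant primary decomposition, then
`D_A(I) = r(Q₁) ∪ … ∪ r(Qₙ)`. -/
theorem dividers_of_irredundant_primary_decomposition {A : Type*} [CommSemiring A]
    (hchar : (1 : A) + 1 = 1) (n : ℕ) (Q : Fin n → Ideal A) (I : Ideal A)
    (hQ : ∀ i, IsPrimaryI (Q i)) (hI : I = ⨅ i, Q i)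
    (hirr : ∀ j : Fin n, ¬ (⨅ i : {i : Fin n // i ≠ j}, Q i.1) ≤ Q j) :
    {x : A | ∃ y : A, y ∉ I ∧ x * y ∈ I} = ⋃ i, rad ((Q i : Ideal A) : Set A) := by
  classical
  subst hI
  ext x
  simp only [Set.mem_setOf_eq, Set.mem_iUnion]
  constructor
  · rintro ⟨y, hy, hxy⟩
    rw [Ideal.mem_iInf] at hy hxy
    push_neg at hy
    obtain ⟨j, hj⟩ := hy
    rcases (hQ j).2 y x (by rw [mul_comm]; exact hxy j) with h | ⟨m, hm, hmx⟩
    · exact absurd h hj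
    · exact ⟨j, m, hm, hmx⟩
  · rintro ⟨j, m, hm, hxm⟩
    obtain ⟨y, hy1, hy2⟩ := SetLike.not_le_iff_exists.mp (hirr j)
    rw [Ideal.mem_iInf] at hy1
    have hex : ∃ k : ℕ, x ^ k * y ∈ ⨅ i, Q i := by
      refine ⟨m, Ideal.mem_iInf.mpr fun i => ?_⟩
      by_cases hij : i = j
      · subst hij; exact Ideal.mul_mem_right _ _ hxm
      · exact Ideal.mul_mem_left _ _ (hy1 ⟨i, hij⟩)
    set k := Nat.find hex with hk
    have hkmem : x ^ k * y ∈ ⨅ i, Q i := Nat.find_spec hex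
    have hk0 : k ≠ 0 := by
      intro h
      have := hkmem
      rw [h, pow_zero, one_mul] at this
      exact hy2 (Ideal.mem_iInf.mp this j)
    refine ⟨x ^ (k - 1) * y, Nat.find_min hex (Nat.pred_lt hk0), ?_⟩
    have : x * (x ^ (k - 1) * y) = x ^ k * y := by
      rw [← mul_assoc, ← pow_succ', Nat.sub_add_cancel (Nat.one_le_iff_ne_zero.mpr hk0)]
    rw [this]
    exact hkmem
end
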